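/- Distributional invariance: let X = (X_1,…,X_p) be an ℝ^p-valued random vector and Y = (Y_1,…,Y_q) an ℝ^q-valued random vector with non-degenerate components, all defined on a common probability space. Then T(Y|X) = T(F_Y(Y) | F_X(X)), where F_X(X) := (F_{X_1}(X_1),…,F_{X_p}(X_p)) and F_Y(Y) := (F_{Y_1}(Y_1),…,F_{Y_q}(Y_q)) denote the componentwise applications of the marginal cumulative distribution functions. -/

import Mathlib

open MeasureTheory ProbabilityTheory

/-- Azadkia–Chatterjee's rank correlation `ξ(Y | m)` of a real random variable `Y`
given a sub-σ-algebra `m`. -/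
noncomputable def xiSigma {Ω : Type*} (m : MeasurableSpace Ω) [MeasurableSpace Ω]
    (P : Measure Ω) (Y : Ω → ℝ) : ℝ :=
  (∫ y, variance (P[Set.indicator {ω | y ≤ Y ω} (fun _ => (1 : ℝ)) | m]) P ∂(P.map Y)) /
  (∫ y, variance (Set.indicator {ω | y ≤ Y ω} (fun _ => (1 : ℝ))) P ∂(P.map Y))

/-- Azadkia–Chatterjee's rank correlation `ξ(Y | X)`: conditioning on the σ-algebra
generated by the random vector `X`. -/
noncomputable def xi {Ω α : Type*} [MeasurableSpace Ω] [MeasurableSpace α]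
    (P : Measure Ω) (Y : Ω → ℝ) (X : Ω → α) : ℝ :=
  xiSigma (MeasurableSpace.comap X inferInstance) P Y

/-- The σ-algebra generated by the response variables with index `< i`,
i.e. by `(Y_1, …, Y_{i-1})`; for `i = 0` it is the trivial σ-algebra `⊥`,
so that `xiSigma (sigmaPast Y 0) P (Y 0) = ξ(Y_1 | ∅) = 0`. -/
def sigmaPast {Ω : Type*} {q : ℕ} (Y : Fin q → Ω → ℝ) (i : Fin q) :
    MeasurableSpace Ω :=
  ⨆ j : Fin q, ⨆ _ : j < i, MeasurableSpace.comap (Y j) inferInstance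

/-- The extension `T(Y | X)` of Azadkia–Chatterjee's rank correlation to a vector
`Y = (Y_1, …, Y_q)` of response variables, given the predictor vector `X`:
`T(Y|X) = 1 − (q − ∑_i ξ(Y_i | (X,Y_{i−1},…,Y_1))) / (q − ∑_i ξ(Y_i | (Y_{i−1},…,Y_1)))`. -/
noncomputable def T {Ω α : Type*} [MeasurableSpace Ω] [MeasurableSpace α]
    (P : Measure Ω) {q : ℕ} (Y : Fin q → Ω → ℝ) (X : Ω → α) : ℝ :=
  1 - ((q : ℝ) - ∑ i, xiSigma (MeasurableSpace.comap X inferInstance ⊔ sigmaPast Y i) P (Y i)) /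
      ((q : ℝ) - ∑ i, xiSigma (sigmaPast Y i) P (Y i))

/-- A real random variable is non-degenerate if it is not almost surely constant. -/
def Nondegenerate {Ω : Type*} [MeasurableSpace Ω] (P : Measure Ω) (Y : Ω → ℝ) : Prop :=
  ¬ ∃ c : ℝ, ∀ᵐ ω ∂P, Y ω = c

/-- The cumulative distribution function `F_W(w) = P(W ≤ w)` of a real random variable `W`. -/
noncomputable def cdf {Ω : Type*} [MeasurableSpace Ω] (P : Measure Ω) (W : Ω → ℝ) (w : ℝ) : ℝ :=
  (P {ω | W ω ≤ w}).toReal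

/-!
For a real random variable `W` with cdf `F`, almost every value `t` of `W` is a point of strict
increase from the left, `F x < F t` for all `x < t`: the exceptional points lie in the countable
union over `r ∈ ℚ` of the sets `{t > r | P^W (r, t] = 0}`, and each of these is null, being an
interval starting at `r` that is either itself of the form `(r, s]` or covered by the intervals
`(r, q]` with `q` rational. Hence `F ∘ W` loses nothing up to null sets: `{F y ≤ F W} = {y ≤ W}`
for `P^W`-a.e. `y`, and `{W ≤ a} = {F W ≤ F a}` almost surely. By the second identity every set
of `σ(X, Y_1, …, Y_{i-1})` agrees up to a null set with a set of `σ(F X, F Y_1, …, F Y_{i-1})`,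
so the two conditional expectations of an indicator agree a.s.; the first one, after the change
of variables `P^{F W} = F_* P^W`, identifies the integrands in the numerator and denominator of
each `ξ`.
-/

open Set Filter

section AeCompletion

variable {Ω : Type*}

def aeCompletion (m' : MeasurableSpace Ω) [MeasurableSpace Ω] (P : Measure Ω) :
    MeasurableSpace Ω where
  MeasurableSet' s := ∃ t, MeasurableSet[m'] t ∧ s =ᵐ[P] t
  measurableSet_empty := ⟨∅, @MeasurableSet.empty _ m', EventuallyEq.rfl⟩
  measurableSet_compl _ := fun ⟨t, ht, hst⟩ => ⟨tᶜ, ht.compl, hst.compl⟩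
  measurableSet_iUnion _ hs := by
    choose t ht hst using hs
    exact ⟨⋃ n, t n, MeasurableSet.iUnion ht, Filter.EventuallyEq.countable_iUnion hst⟩

lemma le_aeCompletion (m' : MeasurableSpace Ω) [MeasurableSpace Ω] (P : Measure Ω) :
    m' ≤ aeCompletion m' P :=
  fun s hs => ⟨s, hs, EventuallyEq.rfl⟩

lemma aeCompletion_mono {m₁ m₂ : MeasurableSpace Ω} [MeasurableSpace Ω] {P : Measure Ω}
    (h : m₁ ≤ m₂) : aeCompletion m₁ P ≤ aeCompletion m₂ P :=
  fun _ ⟨t, ht, hst⟩ => ⟨t, h t ht, hst⟩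

lemma condExp_ae_eq_condExp_of_le_aeCompletion
    {E : Type*} [NormedAddCommGroup E] [NormedSpace ℝ E] [CompleteSpace E]
    {m' m : MeasurableSpace Ω} [mΩ : MeasurableSpace Ω] {P : Measure Ω} [IsFiniteMeasure P]
    (hm'm : m' ≤ m) (hm : m ≤ mΩ) (h : m ≤ aeCompletion m' P) {f : Ω → E}
    (hf : Integrable f P) :
    P[f|m'] =ᵐ[P] P[f|m] := by
  refine ae_eq_condExp_of_forall_setIntegral_eq hm hf
    (fun _ _ _ => integrable_condExp.integrableOn) (fun s hs _ => ?_)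
    (stronglyMeasurable_condExp.mono hm'm).aestronglyMeasurable
  obtain ⟨t, ht, hst⟩ := h s hs
  calc ∫ x in s, (P[f|m']) x ∂P = ∫ x in t, (P[f|m']) x ∂P := setIntegral_congr_set hst
    _ = ∫ x in t, f x ∂P := setIntegral_condExp (hm'm.trans hm) hf ht
    _ = ∫ x in s, f x ∂P := (setIntegral_congr_set hst).symm

end AeCompletion

lemma measure_eq_zero_of_forall_measure_Ioc_eq_zero (μ : Measure ℝ) {r : ℝ} {S : Set ℝ}
    (hS : ∀ t ∈ S, r < t ∧ μ (Ioc r t) = 0) : μ S = 0 := by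
  by_cases hmax : ∃ s, IsGreatest S s
  · obtain ⟨s, hsS, hs⟩ := hmax
    exact measure_mono_null (fun t ht => (⟨(hS t ht).1, hs ht⟩ : t ∈ Ioc r s)) (hS s hsS).2
  refine measure_mono_null (t := ⋃ (q : ℚ) (_ : μ (Ioc r q) = 0), Ioc r q) (fun t ht => ?_)
    (measure_iUnion_null fun q => measure_iUnion_null id)
  obtain ⟨t', ht'S, htt'⟩ : ∃ t' ∈ S, t < t' := by
    by_contra! h
    exact hmax ⟨t, ht, h⟩
  obtain ⟨q, htq, hqt'⟩ := exists_rat_btwn htt'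
  exact mem_iUnion₂.2 ⟨q, measure_mono_null (Ioc_subset_Ioc_right hqt'.le) (hS t' ht'S).2,
    (hS t ht).1, htq.le⟩

section Cdf

variable {Ω : Type*} [MeasurableSpace Ω] {P : Measure Ω} {W : Ω → ℝ}

lemma cdf_mono (P : Measure Ω) [IsFiniteMeasure P] (W : Ω → ℝ) : Monotone (cdf P W) :=
  fun _ _ hab => measureReal_mono fun _ h => le_trans h hab

lemma measurable_cdf (P : Measure Ω) [IsFiniteMeasure P] (W : Ω → ℝ) : Measurable (cdf P W) :=
  (cdf_mono P W).measurable

variable [IsProbabilityMeasure P]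

lemma cdf_eq_cdf_map (hW : Measurable W) : cdf P W = ProbabilityTheory.cdf (P.map W) := by
  have := Measure.isProbabilityMeasure_map (μ := P) hW.aemeasurable
  ext w
  rw [cdf_eq_real, measureReal_def, Measure.map_apply hW measurableSet_Iic]
  rfl

lemma cdf_eq_cdf_iff (hW : Measurable W) {x t : ℝ} (hxt : x ≤ t) :
    cdf P W x = cdf P W t ↔ P.map W (Ioc x t) = 0 := by
  have := Measure.isProbabilityMeasure_map (μ := P) hW.aemeasurable
  have h := (ProbabilityTheory.cdf (P.map W)).measure_Ioc x t
  rw [measure_cdf] at h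
  rw [h, ENNReal.ofReal_eq_zero, sub_nonpos, cdf_eq_cdf_map hW]
  exact ⟨fun h => h.ge, fun h => le_antisymm ((ProbabilityTheory.cdf _).mono hxt) h⟩

lemma ae_cdf_lt_cdf (hW : Measurable W) :
    ∀ᵐ t ∂(P.map W), ∀ x < t, cdf P W x < cdf P W t := by
  rw [ae_iff]
  refine measure_mono_null (t := ⋃ r : ℚ, {t | (r : ℝ) < t ∧ P.map W (Ioc r t) = 0})
    (fun t ht => ?_)
    (measure_iUnion_null fun r => measure_eq_zero_of_forall_measure_Ioc_eq_zero _ fun _ => id)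
  obtain ⟨x, hxt, hle⟩ : ∃ x < t, cdf P W t ≤ cdf P W x := by simpa using ht
  obtain ⟨r, hxr, hrt⟩ := exists_rat_btwn hxt
  exact mem_iUnion.2 ⟨r, hrt, (cdf_eq_cdf_iff hW hrt.le).1
    (le_antisymm (cdf_mono P W hrt.le) (hle.trans (cdf_mono P W hxr.le)))⟩

lemma ae_setOf_cdf_le_cdf_eq (hW : Measurable W) :
    ∀ᵐ y ∂(P.map W), {ω | cdf P W y ≤ cdf P W (W ω)} = {ω | y ≤ W ω} := by
  filter_upwards [ae_cdf_lt_cdf hW] with y hy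
  ext ω
  exact ⟨fun h => not_lt.1 fun hlt => (hy _ hlt).not_ge h, fun h => cdf_mono P W h⟩

lemma setOf_cdf_le_cdf_ae_eq (hW : Measurable W) (a : ℝ) :
    {ω | cdf P W (W ω) ≤ cdf P W a} =ᵐ[P] {ω | W ω ≤ a} := by
  filter_upwards [ae_of_ae_map hW.aemeasurable (ae_cdf_lt_cdf hW)] with ω hω
  exact propext ⟨fun h => not_lt.1 fun hlt => (hω _ hlt).not_ge h, fun h => cdf_mono P W h⟩

lemma measurable_aeCompletion_comap_cdf (hW : Measurable W) :
    Measurable[aeCompletion (.comap (fun ω => cdf P W (W ω)) inferInstance) P] W :=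
  measurable_of_Iic fun a =>
    ⟨_, ⟨Iic (cdf P W a), measurableSet_Iic, rfl⟩, (setOf_cdf_le_cdf_ae_eq hW a).symm⟩

lemma measurable_aeCompletion_comap_cdf_pi {ι : Type*} {X : Ω → ι → ℝ}
    (hX : Measurable X) :
    Measurable[aeCompletion
      (.comap (fun ω j => cdf P (fun ω' => X ω' j) (X ω j)) inferInstance) P] X :=
  (@measurable_pi_iff Ω ι (fun _ => ℝ) (aeCompletion _ P) _ X).2 fun j =>
    have hcoord : Measurable[.comap (fun ω j => cdf P (fun ω' => X ω' j) (X ω j)) inferInstance]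
        fun ω => cdf P (fun ω' => X ω' j) (X ω j) :=
      (measurable_pi_apply j).comp
        (comap_measurable fun ω (j : ι) => cdf P (fun ω' => X ω' j) (X ω j))
    (measurable_aeCompletion_comap_cdf ((measurable_pi_apply j).comp hX)).mono
      (aeCompletion_mono hcoord.comap_le) le_rfl

end Cdf

noncomputable def xiNumerator {Ω : Type*} (m : MeasurableSpace Ω) [MeasurableSpace Ω]
    (P : Measure Ω) (Y : Ω → ℝ) : ℝ :=
  ∫ y, variance (P[Set.indicator {ω | y ≤ Y ω} (fun _ => (1 : ℝ)) | m]) P ∂(P.map Y)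

section Xi

variable {Ω : Type*} {m' m : MeasurableSpace Ω} [mΩ : MeasurableSpace Ω] {P : Measure Ω}
  [IsProbabilityMeasure P] {Y : Ω → ℝ}

lemma xiSigma_eq_div (hY : Measurable Y) :
    xiSigma m P Y = xiNumerator m P Y / xiNumerator mΩ P Y := by
  refine congrArg _ (integral_congr_ae (ae_of_all _ fun y => ?_))
  have hs : MeasurableSet {ω | y ≤ Y ω} := measurableSet_le measurable_const hY
  rw [condExp_of_stronglyMeasurable le_rfl (stronglyMeasurable_const.indicator hs)
    ((integrable_const 1).indicator hs)]

lemma integral_sq_condExp_indicator_mono {s t : Set Ω}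
    (hs : MeasurableSet s) (ht : MeasurableSet t) (hst : s ⊆ t) :
    ∫ ω, (P[s.indicator (fun _ => (1 : ℝ)) | m]) ω ^ 2 ∂P ≤
      ∫ ω, (P[t.indicator (fun _ => (1 : ℝ)) | m]) ω ^ 2 ∂P := by
  have hmem : ∀ u : Set Ω, MeasurableSet u →
      MemLp (P[u.indicator (fun _ => (1 : ℝ)) | m]) 2 P :=
    fun u hu => ((memLp_const (1 : ℝ)).indicator hu).condExp (by norm_num)
  have hle :
      P[s.indicator (fun _ => (1 : ℝ)) | m] ≤ᵐ[P] P[t.indicator (fun _ => (1 : ℝ)) | m] :=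
    condExp_mono ((integrable_const 1).indicator hs) ((integrable_const 1).indicator ht)
      (ae_of_all _ (indicator_le_indicator_of_subset hst fun _ => zero_le_one))
  have hnonneg : 0 ≤ᵐ[P] P[s.indicator (fun _ => (1 : ℝ)) | m] :=
    condExp_nonneg (ae_of_all _ (indicator_nonneg fun _ _ => zero_le_one))
  refine integral_mono_ae (hmem s hs).integrable_sq (hmem t ht).integrable_sq ?_
  filter_upwards [hle, hnonneg] with ω h₁ h₀
  exact pow_le_pow_left₀ h₀ h₁ 2

lemma measurable_variance_condExp_indicator (hm : m ≤ mΩ) (hY : Measurable Y) :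
    Measurable fun y =>
      variance (P[Set.indicator {ω | y ≤ Y ω} (fun _ => (1 : ℝ)) | m]) P := by
  have hs : ∀ y, MeasurableSet {ω | y ≤ Y ω} := fun y => measurableSet_le measurable_const hY
  have hvar : ∀ y, variance (P[Set.indicator {ω | y ≤ Y ω} (fun _ => (1 : ℝ)) | m]) P =
      ∫ ω, (P[Set.indicator {ω | y ≤ Y ω} (fun _ => (1 : ℝ)) | m]) ω ^ 2 ∂P
        - P.real {ω | y ≤ Y ω} ^ 2 := fun y => by
    rw [variance_eq_sub (((memLp_const (1 : ℝ)).indicator (hs y)).condExp (by norm_num)),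
      integral_condExp hm, integral_indicator_const _ (hs y), smul_eq_mul, mul_one]
    rfl
  have hsub : ∀ {y y' : ℝ}, y ≤ y' → {ω | y' ≤ Y ω} ⊆ {ω | y ≤ Y ω} :=
    fun hyy' _ h => le_trans hyy' h
  have hsq : Antitone fun y =>
      ∫ ω, (P[Set.indicator {ω | y ≤ Y ω} (fun _ => (1 : ℝ)) | m]) ω ^ 2 ∂P :=
    fun y y' hyy' => integral_sq_condExp_indicator_mono (hs y') (hs y) (hsub hyy')
  have hprob : Antitone fun y => P.real {ω | y ≤ Y ω} :=
    fun y y' hyy' => measureReal_mono (hsub hyy')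
  simp only [hvar]
  exact hsq.measurable.sub (hprob.measurable.pow_const 2)

lemma xiNumerator_cdf_comp (hY : Measurable Y) (hm'm : m' ≤ m) (hm : m ≤ mΩ)
    (h : m ≤ aeCompletion m' P) :
    xiNumerator m' P (fun ω => cdf P Y (Y ω)) = xiNumerator m P Y := by
  have hF := measurable_cdf P Y
  have hFY : Measurable fun ω => cdf P Y (Y ω) := hF.comp hY
  have hmap : P.map (fun ω => cdf P Y (Y ω)) = (P.map Y).map (cdf P Y) :=
    (Measure.map_map hF hY).symm
  rw [xiNumerator, xiNumerator, hmap, integral_map hF.aemeasurable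
    (measurable_variance_condExp_indicator (hm'm.trans hm) hFY).aestronglyMeasurable]
  refine integral_congr_ae ?_
  filter_upwards [ae_setOf_cdf_le_cdf_eq hY] with y hy
  rw [hy]
  exact variance_congr (condExp_ae_eq_condExp_of_le_aeCompletion hm'm hm h
    ((integrable_const 1).indicator (measurableSet_le measurable_const hY)))

lemma xiSigma_cdf_comp (hY : Measurable Y) (hm'm : m' ≤ m) (hm : m ≤ mΩ)
    (h : m ≤ aeCompletion m' P) :
    xiSigma m' P (fun ω => cdf P Y (Y ω)) = xiSigma m P Y := by
  have hFY : Measurable fun ω => cdf P Y (Y ω) := (measurable_cdf P Y).comp hY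
  rw [xiSigma_eq_div hFY, xiSigma_eq_div hY,
    xiNumerator_cdf_comp hY hm'm hm h,
    xiNumerator_cdf_comp hY le_rfl le_rfl (le_aeCompletion _ P)]

end Xi

section SigmaPast

variable {Ω : Type*} {q : ℕ} {Y : Fin q → Ω → ℝ} {i : Fin q}

lemma comap_le_sigmaPast {j : Fin q} (hji : j < i) :
    MeasurableSpace.comap (Y j) inferInstance ≤ sigmaPast Y i :=
  le_iSup₂ (f := fun j (_ : j < i) => MeasurableSpace.comap (Y j) inferInstance) j hji

lemma sigmaPast_le_iff {m : MeasurableSpace Ω} :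
    sigmaPast Y i ≤ m ↔ ∀ j < i, MeasurableSpace.comap (Y j) inferInstance ≤ m :=
  iSup₂_le_iff

lemma sigmaPast_comp_le {g : Fin q → ℝ → ℝ} (hg : ∀ j, Measurable (g j)) :
    sigmaPast (fun j ω => g j (Y j ω)) i ≤ sigmaPast Y i :=
  sigmaPast_le_iff.2 fun j hji =>
    ((hg j).comp (comap_measurable (Y j))).comap_le.trans (comap_le_sigmaPast hji)

lemma sigmaPast_le [mΩ : MeasurableSpace Ω] (hY : ∀ j, Measurable (Y j)) :
    sigmaPast Y i ≤ mΩ :=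
  sigmaPast_le_iff.2 fun j _ => (hY j).comap_le

lemma sigmaPast_le_aeCompletion_sigmaPast_cdf [MeasurableSpace Ω] {P : Measure Ω}
    [IsProbabilityMeasure P] (hY : ∀ j, Measurable (Y j)) :
    sigmaPast Y i ≤ aeCompletion (sigmaPast (fun j ω => cdf P (Y j) (Y j ω)) i) P :=
  sigmaPast_le_iff.2 fun j hji =>
    (measurable_aeCompletion_comap_cdf (hY j)).comap_le.trans
      (aeCompletion_mono (comap_le_sigmaPast (Y := fun j ω => cdf P (Y j) (Y j ω)) hji))

end SigmaPast

theorem T_distributional_invariance_general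
    {Ω : Type*} [MeasurableSpace Ω] (P : Measure Ω) [IsProbabilityMeasure P]
    {p q : ℕ} (X : Ω → (Fin p → ℝ)) (Y : Fin q → Ω → ℝ)
    (hX : Measurable X) (hY : ∀ i, Measurable (Y i)) :
    T P Y X =
      T P (fun i => fun ω => cdf P (Y i) (Y i ω))
        (fun ω => fun j => cdf P (fun ω' => X ω' j) (X ω j)) := by
  set X' : Ω → Fin p → ℝ := fun ω j => cdf P (fun ω' => X ω' j) (X ω j)
  have hX'X : MeasurableSpace.comap X' inferInstance ≤ MeasurableSpace.comap X inferInstance :=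
    ((measurable_pi_lambda _ fun j => (measurable_cdf P _).comp (measurable_pi_apply j)).comp
      (comap_measurable X)).comap_le
  have hY'Y := fun i => sigmaPast_comp_le (Y := Y) (i := i) fun j => measurable_cdf P (Y j)
  have hYY' := fun i => sigmaPast_le_aeCompletion_sigmaPast_cdf (P := P) (i := i) hY
  have hXX' : ∀ i, MeasurableSpace.comap X inferInstance ⊔ sigmaPast Y i ≤
      aeCompletion (MeasurableSpace.comap X' inferInstance ⊔ sigmaPast _ i) P := fun i =>
    sup_le
      ((measurable_aeCompletion_comap_cdf_pi hX).comap_le.trans (aeCompletion_mono le_sup_left))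
      ((hYY' i).trans (aeCompletion_mono le_sup_right))
  unfold T
  congr 3
  · exact Finset.sum_congr rfl fun i _ => (xiSigma_cdf_comp (hY i) (sup_le_sup hX'X (hY'Y i))
      (sup_le hX.comap_le (sigmaPast_le hY)) (hXX' i)).symm
  · exact Finset.sum_congr rfl fun i _ =>
      (xiSigma_cdf_comp (hY i) (hY'Y i) (sigmaPast_le hY) (hYY' i)).symm

theorem T_distributional_invariance
    {Ω : Type*} [MeasurableSpace Ω] (P : Measure Ω) [IsProbabilityMeasure P]
    {p q : ℕ} (X : Ω → (Fin p → ℝ)) (Y : Fin q → Ω → ℝ)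
    (hX : Measurable X) (hY : ∀ i, Measurable (Y i))
    (hnd : ∀ i, Nondegenerate P (Y i)) :
    T P Y X =
      T P (fun i => fun ω => cdf P (Y i) (Y i ω))
        (fun ω => fun j => cdf P (fun ω' => X ω' j) (X ω j)) :=
  T_distributional_invariance_general P X Y hX hY
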